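/- arXiv:math/0703306 — 3 statements merged into one kernel-verified Lean document; each statement's English description precedes it below -/
import Mathlib

section
/- Let K ⊂ ℂ be a compact set, Ω ⊇ K an open set, f : ℂ → ℂ holomorphic on Ω, and λ > 1 with |f′(z)| ≥ λ for every z ∈ K. Then for every λ′ with 1 < λ′ < λ there exists r̃ > 0 such that the following holds for every n ≥ 1: if z, w ∈ ℂ satisfy f^k(z) ∈ K, f^k(w) ∈ K and |f^k(z) − f^k(w)| ≤ r̃ for all 0 ≤ k ≤ n − 1, then |f^n(z) − f^n(w)| ≥ (λ′)^n |z − w|. -/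
/-- Iterated uniform expansion estimate: along orbits of two points which stay in the
expanding compact set `K` and stay within distance `r̃` of each other, the distance
between the orbits grows at least geometrically with factor `λ' > 1`. -/
theorem iterated_expansion_at_small_scale (K Ω : Set ℂ) (f : ℂ → ℂ) (lam : ℝ)
    (hK : IsCompact K) (hΩ : IsOpen Ω) (hKΩ : K ⊆ Ω)
    (hf : DifferentiableOn ℂ f Ω) (hlam : 1 < lam)
    (hderiv : ∀ z ∈ K, lam ≤ ‖deriv f z‖) :
    ∀ lam' : ℝ, 1 < lam' → lam' < lam →
      ∃ r > (0 : ℝ), ∀ n : ℕ, 1 ≤ n → ∀ z w : ℂ,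
        (∀ k < n, f^[k] z ∈ K ∧ f^[k] w ∈ K ∧ ‖f^[k] z - f^[k] w‖ ≤ r) →
        lam' ^ n * ‖z - w‖ ≤ ‖f^[n] z - f^[n] w‖ := by
  intro lam' hlam'1 hlam'lam
  -- thickening of K inside Ω
  obtain ⟨δ, hδpos, hδsub⟩ := hK.exists_thickening_subset_open hΩ hKΩ
  set K' : Set ℂ := Metric.cthickening (δ / 2) K with hK'def
  have hK'Ω : K' ⊆ Ω := by
    refine (Metric.cthickening_subset_thickening' hδpos (by linarith) K).trans hδsub
  have hK'cpt : IsCompact K' := hK.cthickening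
  -- deriv f is continuous on Ω
  have hfa : AnalyticOnNhd ℂ f Ω := hf.analyticOnNhd hΩ
  have hderivCont : ContinuousOn (deriv f) Ω := hfa.deriv.continuousOn
  have huc : UniformContinuousOn (deriv f) K' :=
    hK'cpt.uniformContinuousOn_of_continuous (hderivCont.mono hK'Ω)
  have hε : (0 : ℝ) < lam - lam' := by linarith
  obtain ⟨r₁, hr₁pos, hr₁⟩ :=
    (Metric.uniformContinuousOn_iff).1 huc (lam - lam') hε
  set r : ℝ := min (δ / 2) (r₁ / 2) with hrdef
  have hrpos : 0 < r := lt_min (by linarith) (by linarith)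
  refine ⟨r, hrpos, ?_⟩
  -- one-step estimate
  have step : ∀ z w : ℂ, z ∈ K → ‖z - w‖ ≤ r →
      lam' * ‖z - w‖ ≤ ‖f z - f w‖ := by
    intro z w hz hzw
    have hseg : segment ℝ z w ⊆ K' := by
      intro x hx
      have hx' : ‖x - z‖ ≤ ‖w - z‖ := by
        obtain ⟨a, b, ha, hb, hab, rfl⟩ := hx
        have : a • z + b • w - z = b • (w - z) := by
          have : a = 1 - b := by linarith
          rw [this]; module
        rw [this, norm_smul]
        simpa [abs_of_nonneg hb] using
          mul_le_of_le_one_left (norm_nonneg (w - z)) (by simpa [abs_of_nonneg hb] using hab ▸ (by linarith : b ≤ 1))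
      have hxz : dist x z ≤ δ / 2 := by
        rw [dist_eq_norm]
        calc ‖x - z‖ ≤ ‖w - z‖ := hx'
          _ = ‖z - w‖ := by rw [norm_sub_rev]
          _ ≤ r := hzw
          _ ≤ δ / 2 := min_le_left _ _
      exact Metric.mem_cthickening_of_dist_le x z (δ/2) K hz hxz
    have hsegΩ : segment ℝ z w ⊆ Ω := hseg.trans hK'Ω
    have hzK' : z ∈ K' := hseg (left_mem_segment ℝ z w)
    -- the auxiliary function g x = f x - (deriv f z) * x
    set c : ℂ := deriv f z with hcdef
    have hdiff : ∀ x ∈ segment ℝ z w, HasDerivWithinAt (fun x => f x - c * x)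
        (deriv f x - c) (segment ℝ z w) x := by
      intro x hx
      have hfd : DifferentiableAt ℂ f x := hf.differentiableAt (hΩ.mem_nhds (hsegΩ hx))
      exact ((hfd.hasDerivAt.sub ((hasDerivAt_id x).const_mul c)).congr_deriv
        (by rw [mul_one])).hasDerivWithinAt
    have hbound : ∀ x ∈ segment ℝ z w, ‖deriv f x - c‖ ≤ lam - lam' := by
      intro x hx
      have hxK' : x ∈ K' := hseg hx
      have hdxz : dist x z ≤ r := by
        rw [dist_eq_norm]
        calc ‖x - z‖ ≤ ‖w - z‖ := by
              obtain ⟨a, b, ha, hb, hab, rfl⟩ := hx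
              have : a • z + b • w - z = b • (w - z) := by
                have : a = 1 - b := by linarith
                rw [this]; module
              rw [this, norm_smul]
              simpa [abs_of_nonneg hb] using
                mul_le_of_le_one_left (norm_nonneg (w - z)) (by simpa [abs_of_nonneg hb] using hab ▸ (by linarith : b ≤ 1))
          _ = ‖z - w‖ := by rw [norm_sub_rev]
          _ ≤ r := hzw
      have hlt : dist x z < r₁ := lt_of_le_of_lt (hdxz.trans (min_le_right _ _)) (by linarith)
      have := hr₁ x hxK' z hzK' hlt
      rw [dist_eq_norm] at this
      exact this.le
    have hmv := Convex.norm_image_sub_le_of_norm_hasDerivWithin_le hdiff hbound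
      (convex_segment z w) (left_mem_segment ℝ z w) (right_mem_segment ℝ z w)
    -- hmv : ‖(f w - c*w) - (f z - c*z)‖ ≤ (lam - lam') * ‖w - z‖
    have key : ‖f w - f z - c * (w - z)‖ ≤ (lam - lam') * ‖w - z‖ := by
      have : f w - c * w - (f z - c * z) = f w - f z - c * (w - z) := by ring
      rwa [this] at hmv
    have hclb : lam ≤ ‖c‖ := hderiv z hz
    have h1 : ‖c * (w - z)‖ - ‖f w - f z - c * (w - z)‖ ≤ ‖f w - f z‖ := by
      have := norm_sub_norm_le (c * (w - z)) (c * (w - z) - (f w - f z))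
      have h2 : c * (w - z) - (c * (w - z) - (f w - f z)) = f w - f z := by ring
      rw [h2] at this
      calc ‖c * (w - z)‖ - ‖f w - f z - c * (w - z)‖
          = ‖c * (w - z)‖ - ‖c * (w - z) - (f w - f z)‖ := by rw [norm_sub_rev]
        _ ≤ ‖f w - f z‖ := this
    have hcw : lam * ‖w - z‖ ≤ ‖c * (w - z)‖ := by
      rw [norm_mul]
      exact mul_le_mul_of_nonneg_right hclb (norm_nonneg _)
    have : lam' * ‖w - z‖ ≤ ‖f w - f z‖ := by nlinarith [norm_nonneg (w - z)]
    calc lam' * ‖z - w‖ = lam' * ‖w - z‖ := by rw [norm_sub_rev]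
      _ ≤ ‖f w - f z‖ := this
      _ = ‖f z - f w‖ := by rw [norm_sub_rev]
  -- iterate
  have main : ∀ n : ℕ, ∀ z w : ℂ,
      (∀ k < n, f^[k] z ∈ K ∧ f^[k] w ∈ K ∧ ‖f^[k] z - f^[k] w‖ ≤ r) →
      lam' ^ n * ‖z - w‖ ≤ ‖f^[n] z - f^[n] w‖ := by
    intro n
    induction n with
    | zero => intro z w _; simp
    | succ n ih =>
      intro z w h
      have hn := ih z w (fun k hk => h k (hk.trans (Nat.lt_succ_self n)))
      obtain ⟨hzK, hwK, hzw⟩ := h n (Nat.lt_succ_self n)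
      have := step (f^[n] z) (f^[n] w) hzK hzw
      have hiter : f^[n+1] z = f (f^[n] z) := Function.iterate_succ_apply' f n z
      have hiter' : f^[n+1] w = f (f^[n] w) := Function.iterate_succ_apply' f n w
      rw [hiter, hiter']
      calc lam' ^ (n+1) * ‖z - w‖ = lam' * (lam' ^ n * ‖z - w‖) := by ring
        _ ≤ lam' * ‖f^[n] z - f^[n] w‖ :=
            mul_le_mul_of_nonneg_left hn (by linarith)
        _ ≤ ‖f (f^[n] z) - f (f^[n] w)‖ := this
  exact fun n _ => main n
end

section
/- Let g : ℂ → ℂ be a function, let n ≥ 1 be an integer, let λ > 1, δ > 0, L ≥ 0, c > 0, and let μ_0, …, μ_{n−1} and ξ_0, …, ξ_{n−1} be complex numbers such that for every 0 ≤ j ≤ n − 1: |μ_j − ξ_j| ≤ λ^{j−n} δ, |g(ξ_j)| ≥ c, and |g(μ_j) − g(ξ_j)| ≤ L |μ_j − ξ_j|. Then |∏_{j=0}^{n−1} (g(μ_j)/g(ξ_j)) − 1| ≤ exp(L δ / (c (λ − 1))) − 1. -/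
lemma prod_one_add_sub_one_norm_le {ι : Type*} (s : Finset ι) (u : ι → ℂ) :
    ‖(∏ i ∈ s, (1 + u i)) - 1‖ ≤ (∏ i ∈ s, (1 + ‖u i‖)) - 1 := by
  classical
  induction s using Finset.induction_on with
  | empty => simp
  | @insert a s ha ih =>
    rw [Finset.prod_insert ha, Finset.prod_insert ha]
    have key : (1 + u a) * ∏ i ∈ s, (1 + u i) - 1
        = (1 + u a) * ((∏ i ∈ s, (1 + u i)) - 1) + u a := by ring
    rw [key]
    have h1 : ‖(1 + u a) * ((∏ i ∈ s, (1 + u i)) - 1) + u a‖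
        ≤ ‖1 + u a‖ * ‖(∏ i ∈ s, (1 + u i)) - 1‖ + ‖u a‖ := by
      calc _ ≤ ‖(1 + u a) * ((∏ i ∈ s, (1 + u i)) - 1)‖ + ‖u a‖ := norm_add_le _ _
        _ = _ := by rw [norm_mul]
    have h2 : ‖(1 : ℂ) + u a‖ ≤ 1 + ‖u a‖ := by
      simpa using norm_add_le (1 : ℂ) (u a)
    have hP : (0:ℝ) ≤ (∏ i ∈ s, (1 + ‖u i‖)) - 1 := by
      have : (1:ℝ) ≤ ∏ i ∈ s, (1 + ‖u i‖) := by
        calc (1:ℝ) = ∏ i ∈ s, 1 := by simp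
        _ ≤ _ := Finset.prod_le_prod (by intros; norm_num) (by intro i _; linarith [norm_nonneg (u i)])
      linarith
    have h3 : ‖1 + u a‖ * ‖(∏ i ∈ s, (1 + u i)) - 1‖ + ‖u a‖
        ≤ (1 + ‖u a‖) * ((∏ i ∈ s, (1 + ‖u i‖)) - 1) + ‖u a‖ := by
      gcongr
    calc _ ≤ _ := h1
      _ ≤ _ := h3
      _ = (1 + ‖u a‖) * (∏ i ∈ s, (1 + ‖u i‖)) - 1 := by ring

lemma prod_one_add_sub_one_norm_le_exp {ι : Type*} (s : Finset ι) (u : ι → ℂ) :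
    ‖(∏ i ∈ s, (1 + u i)) - 1‖ ≤ Real.exp (∑ i ∈ s, ‖u i‖) - 1 := by
  refine (prod_one_add_sub_one_norm_le s u).trans ?_
  have : (∏ i ∈ s, (1 + ‖u i‖)) ≤ ∏ i ∈ s, Real.exp ‖u i‖ :=
    Finset.prod_le_prod (by intro i _; linarith [norm_nonneg (u i)])
      (fun i _ => by linarith [Real.add_one_le_exp ‖u i‖])
  rw [← Real.exp_sum] at this
  linarith

/-- Abstract first step of the Main Distortion Lemma: if two orbits `(μ j)` and `(ξ j)`
approach each other backward-exponentially, and `g` is Lipschitz with constant `L` and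
bounded below by `c` along the orbits, then the ratio of the products `∏ g(μ j)` and
`∏ g(ξ j)` is close to `1`. -/
theorem distortion_of_products (g : ℂ → ℂ) (n : ℕ) (lam δ L c : ℝ)
    (μ ξ : ℕ → ℂ)
    (hn : 1 ≤ n) (hlam : 1 < lam) (hδ : 0 < δ) (hL : 0 ≤ L) (hc : 0 < c)
    (hclose : ∀ j < n, ‖μ j - ξ j‖ ≤ lam ^ ((j : ℝ) - (n : ℝ)) * δ)
    (hlow : ∀ j < n, c ≤ ‖g (ξ j)‖)
    (hlip : ∀ j < n, ‖g (μ j) - g (ξ j)‖ ≤ L * ‖μ j - ξ j‖) :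
    ‖(∏ j ∈ Finset.range n, (g (μ j) / g (ξ j))) - 1‖ ≤
      Real.exp (L * δ / (c * (lam - 1))) - 1 := by
  have hlam0 : (0:ℝ) < lam := lt_trans one_pos hlam
  set u : ℕ → ℂ := fun j => g (μ j) / g (ξ j) - 1 with hu
  have hne : ∀ j < n, g (ξ j) ≠ 0 := fun j hj => by
    intro h; have := hlow j hj; rw [h] at this; simp at this; linarith
  have hprod : (∏ j ∈ Finset.range n, (g (μ j) / g (ξ j)))
      = ∏ j ∈ Finset.range n, (1 + u j) := by
    refine Finset.prod_congr rfl fun j _ => ?_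
    have h : u j = g (μ j) / g (ξ j) - 1 := rfl
    rw [h]; ring
  rw [hprod]
  refine (prod_one_add_sub_one_norm_le_exp _ _).trans ?_
  have hsum : (∑ j ∈ Finset.range n, ‖u j‖) ≤ L * δ / (c * (lam - 1)) := by
    have hbound : ∀ j ∈ Finset.range n,
        ‖u j‖ ≤ (L * δ / c) * lam ^ ((j : ℝ) - (n : ℝ)) := by
      intro j hj
      rw [Finset.mem_range] at hj
      have h1 : ‖u j‖ = ‖g (μ j) - g (ξ j)‖ / ‖g (ξ j)‖ := by
        show ‖g (μ j) / g (ξ j) - 1‖ = _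
        have : g (μ j) / g (ξ j) - 1 = (g (μ j) - g (ξ j)) / g (ξ j) := by
          field_simp [hne j hj]
        rw [this, norm_div]
      rw [h1]
      have h2 : ‖g (μ j) - g (ξ j)‖ ≤ L * (lam ^ ((j : ℝ) - (n : ℝ)) * δ) := by
        refine (hlip j hj).trans ?_
        exact mul_le_mul_of_nonneg_left (hclose j hj) hL
      have h3 : ‖g (μ j) - g (ξ j)‖ / ‖g (ξ j)‖
          ≤ (L * (lam ^ ((j : ℝ) - (n : ℝ)) * δ)) / c := by
        apply div_le_div₀ (by positivity) h2 hc (hlow j hj)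
      refine h3.trans (le_of_eq ?_)
      field_simp
    have hgeom : (∑ j ∈ Finset.range n, lam ^ ((j : ℝ) - (n : ℝ)))
        ≤ 1 / (lam - 1) := by
      have hrw : ∀ j ∈ Finset.range n,
          lam ^ ((j : ℝ) - (n : ℝ)) = lam ^ j / lam ^ n := by
        intro j _
        rw [Real.rpow_sub hlam0, Real.rpow_natCast, Real.rpow_natCast]
      rw [Finset.sum_congr rfl hrw, ← Finset.sum_div,
        geom_sum_eq hlam.ne' n]
      rw [div_div]
      have hn1 : (0:ℝ) < lam ^ n := by positivity
      have hlam1 : (0:ℝ) < lam - 1 := by linarith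
      rw [div_le_div_iff₀ (mul_pos hlam1 hn1) hlam1]
      nlinarith [hn1, hlam1]
    calc (∑ j ∈ Finset.range n, ‖u j‖)
        ≤ ∑ j ∈ Finset.range n, (L * δ / c) * lam ^ ((j : ℝ) - (n : ℝ)) :=
          Finset.sum_le_sum hbound
      _ = (L * δ / c) * ∑ j ∈ Finset.range n, lam ^ ((j : ℝ) - (n : ℝ)) := by
          rw [Finset.mul_sum]
      _ ≤ (L * δ / c) * (1 / (lam - 1)) := by
          apply mul_le_mul_of_nonneg_left hgeom (by positivity)
      _ = L * δ / (c * (lam - 1)) := by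
          field_simp
  have := Real.exp_le_exp.mpr hsum
  linarith
end

section
/- Let Ω ⊆ ℂ be open, g : ℂ → ℂ holomorphic on Ω, A ⊆ Ω a measurable set, c > 0 a constant with |g′(z)| ≥ c for all z ∈ A, and p ∈ ℕ such that every w ∈ ℂ has at most p preimages under g in A (i.e. #(A ∩ g⁻¹({w})) ≤ p for all w ∈ ℂ). Then μ(A) ≤ (p/c²) · μ(B) for every measurable set B ⊇ g(A), where μ is the Lebesgue measure on ℂ ≅ ℝ². -/
/-! Since `|g′| ≥ c > 0` on `A`, the inverse function theorem makes `g` locally injective there,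
so `A` splits into countably many disjoint measurable pieces on each of which `g` is injective.
On such a piece `S` the real Jacobian of `g` is `|g′|² ≥ c²`, and the change of variables formula
gives `c² μ(S) ≤ μ(g(S))`. A point of `B` lies in the images of at most `p` pieces, because the
pieces are disjoint and the point has at most `p` preimages in `A`; integrating this multiplicity
bound gives `∑ μ(g(S)) ≤ p μ(B)`, hence `c² μ(A) ≤ p μ(B)`. -/

open MeasureTheory Set Filter Topology Function
open scoped ENNReal

theorem Complex.det_smul_one (a : ℂ) :
    (a • (1 : ℂ →L[ℝ] ℂ)).det = Complex.normSq a := by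
  rw [← Algebra.norm_complex_apply, Algebra.norm_apply]
  rfl

theorem HasStrictDerivAt.exists_mem_nhds_injOn {𝕜 : Type*} [NontriviallyNormedField 𝕜]
    [CompleteSpace 𝕜] {f : 𝕜 → 𝕜} {f' a : 𝕜} (hf : HasStrictDerivAt f f' a) (hf' : f' ≠ 0) :
    ∃ U ∈ 𝓝 a, InjOn f U :=
  ⟨_, hf.eventually_left_inverse hf', fun _ hx _ hy hxy =>
    hx.symm.trans ((congrArg _ hxy).trans hy)⟩

theorem exists_seq_isOpen_injOn_cover {α β : Type*} [TopologicalSpace α]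
    [SecondCountableTopology α] {f : α → β} {A : Set α} (hloc : ∀ x ∈ A, ∃ U ∈ 𝓝 x, InjOn f U) :
    ∃ V : ℕ → Set α, (∀ n, IsOpen (V n)) ∧ (∀ n, InjOn f (V n)) ∧ A ⊆ ⋃ n, V n := by
  set 𝒰 : Set (Set α) := {V | IsOpen V ∧ InjOn f V}
  obtain ⟨T, hTc, hT𝒰, hTU⟩ := TopologicalSpace.isOpen_sUnion_countable 𝒰 fun _ h => h.1
  -- `∅ ∈ 𝒰` makes the countable subfamily nonempty, so that it can be enumerated.
  obtain ⟨V, hV⟩ := (hTc.insert ∅).exists_eq_range (insert_nonempty _ _)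
  have hV𝒰 : ∀ n, V n ∈ 𝒰 := fun n =>
    insert_subset (show ∅ ∈ 𝒰 from ⟨isOpen_empty, injOn_empty f⟩) hT𝒰 (hV ▸ mem_range_self n)
  refine ⟨V, fun n => (hV𝒰 n).1, fun n => (hV𝒰 n).2, fun x hx => ?_⟩
  obtain ⟨U, hU, hinj⟩ := hloc x hx
  obtain ⟨W, hWU, hWo, hxW⟩ := mem_nhds_iff.1 hU
  rw [← sUnion_range, ← hV, sUnion_insert, empty_union, hTU]
  exact ⟨W, ⟨hWo, hinj.mono hWU⟩, hxW⟩

theorem exists_measurable_partition_injOn {α β : Type*} [TopologicalSpace α]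
    [SecondCountableTopology α] [MeasurableSpace α] [OpensMeasurableSpace α]
    {f : α → β} {A : Set α} (hA : MeasurableSet A) (hloc : ∀ x ∈ A, ∃ U ∈ 𝓝 x, InjOn f U) :
    ∃ S : ℕ → Set α, (∀ n, MeasurableSet (S n)) ∧ Pairwise (Disjoint on S) ∧
      ⋃ n, S n = A ∧ ∀ n, InjOn f (S n) := by
  obtain ⟨V, hVo, hVinj, hAV⟩ := exists_seq_isOpen_injOn_cover hloc
  refine ⟨fun n => A ∩ disjointed V n,
    fun n => hA.inter (.disjointed (fun i => (hVo i).measurableSet) n),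
    fun m n hmn => (disjoint_disjointed V hmn).mono inter_subset_right inter_subset_right,
    by rw [← inter_iUnion, iUnion_disjointed, inter_eq_left.2 hAV],
    fun n => (hVinj n).mono (inter_subset_right.trans (disjointed_subset V n))⟩

theorem tsum_indicator_one_eq_encard {α ι : Type*} (T : ι → Set α) (w : α) :
    ∑' n, (T n).indicator (1 : α → ℝ≥0∞) w = {n | w ∈ T n}.encard := by
  rw [← ENNReal.tsum_set_one, tsum_subtype _ fun _ => (1 : ℝ≥0∞)]
  rfl

theorem tsum_measure_le_mul_measure_of_encard_le {α ι : Type*} [MeasurableSpace α]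
    [Countable ι] {μ : Measure α} {T : ι → Set α} {B : Set α} {p : ℕ∞}
    (hT : ∀ n, MeasurableSet (T n)) (hTB : ∀ n, T n ⊆ B) (hmult : ∀ w, {n | w ∈ T n}.encard ≤ p) :
    ∑' n, μ (T n) ≤ p * μ B := by
  have hpt : ∀ w, ∑' n, (T n).indicator 1 w ≤ B.indicator (fun _ => (p : ℝ≥0∞)) w := by
    intro w
    rw [tsum_indicator_one_eq_encard]
    by_cases hw : w ∈ B
    · rw [indicator_of_mem hw]
      exact_mod_cast hmult w
    · have : {n | w ∈ T n} = ∅ := eq_empty_of_forall_notMem fun n hn => hw (hTB n hn)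
      simp [this]
  calc ∑' n, μ (T n) = ∫⁻ w, ∑' n, (T n).indicator 1 w ∂μ := by
        rw [lintegral_tsum fun n => (measurable_one.indicator (hT n)).aemeasurable]
        simp_rw [lintegral_indicator_one (hT _)]
    _ ≤ ∫⁻ w, B.indicator (fun _ => (p : ℝ≥0∞)) w ∂μ := lintegral_mono hpt
    _ ≤ p * μ B := lintegral_indicator_const_le B _

theorem encard_setOf_mem_image_le {α β ι : Type*} {f : α → β} {S : ι → Set α} {A : Set α}
    (hdisj : Pairwise (Disjoint on S)) (hSA : ∀ n, S n ⊆ A) (w : β) :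
    {n | w ∈ f '' S n}.encard ≤ (A ∩ f ⁻¹' {w}).encard := by
  rcases isEmpty_or_nonempty α with hα | hα
  · simp [eq_empty_of_isEmpty]
  have hpre : ∀ n ∈ {n | w ∈ f '' S n}, ∃ z, z ∈ S n ∧ f z = w := fun _ hn => hn
  choose! z hzS hzw using hpre
  refine encard_le_encard_of_injOn (f := z) (fun n hn => ⟨hSA n (hzS n hn), hzw n hn⟩) ?_
  intro m hm n hn hmn
  by_contra hne
  exact (hdisj hne).le_bot ⟨hzS m hm, hmn ▸ hzS n hn⟩

theorem Complex.lintegral_enorm_deriv_sq_eq_volume_image {g g' : ℂ → ℂ} {S : Set ℂ}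
    (hS : MeasurableSet S) (hg : ∀ z ∈ S, HasDerivWithinAt g (g' z) S z) (hinj : InjOn g S) :
    ∫⁻ z in S, ‖g' z‖ₑ ^ 2 = volume (g '' S) := by
  rw [← lintegral_abs_det_fderiv_eq_addHaar_image volume hS
    (fun z hz => (hg z hz).complexToReal_fderiv) hinj]
  simp_rw [Complex.det_smul_one, Complex.normSq_eq_norm_sq, abs_pow, abs_norm,
    ENNReal.ofReal_pow (norm_nonneg _), ofReal_norm]

theorem Complex.ofReal_sq_mul_volume_le_volume_image {g g' : ℂ → ℂ} {S : Set ℂ} {c : ℝ}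
    (hc : 0 ≤ c) (hS : MeasurableSet S) (hg : ∀ z ∈ S, HasDerivWithinAt g (g' z) S z)
    (hinj : InjOn g S) (hlow : ∀ z ∈ S, c ≤ ‖g' z‖) :
    ENNReal.ofReal (c ^ 2) * volume S ≤ volume (g '' S) := by
  rw [← Complex.lintegral_enorm_deriv_sq_eq_volume_image hS hg hinj, ← setLIntegral_const]
  refine setLIntegral_mono' hS fun z hz => ?_
  rw [ENNReal.ofReal_pow hc, ← ofReal_norm]
  gcongr
  exact hlow z hz

theorem mul_measure_le_mul_measure_of_partition {α β : Type*} [MeasurableSpace α]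
    [MeasurableSpace β] {μ : Measure α} {ν : Measure β} {f : α → β} {A : Set α} {B : Set β}
    {S : ℕ → Set α} {a : ℝ≥0∞} {p : ℕ∞} (hS : ∀ n, MeasurableSet (S n))
    (hdisj : Pairwise (Disjoint on S)) (hSA : ⋃ n, S n = A)
    (himage : ∀ n, MeasurableSet (f '' S n)) (hexpand : ∀ n, a * μ (S n) ≤ ν (f '' S n))
    (hAB : f '' A ⊆ B) (hp : ∀ w, (A ∩ f ⁻¹' {w}).encard ≤ p) :
    a * μ A ≤ p * ν B := by
  have hSA' : ∀ n, S n ⊆ A := fun n => hSA ▸ subset_iUnion S n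
  calc a * μ A = ∑' n, a * μ (S n) := by
        rw [← hSA, measure_iUnion hdisj hS, ENNReal.tsum_mul_left]
    _ ≤ ∑' n, ν (f '' S n) := ENNReal.tsum_le_tsum hexpand
    _ ≤ p * ν B := tsum_measure_le_mul_measure_of_encard_le himage
        (fun n => (image_mono (hSA' n)).trans hAB)
        (fun w => (encard_setOf_mem_image_le hdisj hSA' w).trans (hp w))

/-- If `|g′| ≥ c` on a measurable set `A`, and each point has at most `p` preimages
under `g` in `A`, then `μ(A) ≤ (p/c²) μ(B)` for any measurable `B ⊇ g(A)`. -/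
theorem measure_le_of_expanding_bounded_degree (Ω : Set ℂ) (g : ℂ → ℂ) (A : Set ℂ)
    (c : ℝ) (p : ℕ)
    (hΩ : IsOpen Ω) (hg : DifferentiableOn ℂ g Ω)
    (hA : MeasurableSet A) (hAΩ : A ⊆ Ω)
    (hc : 0 < c) (hlow : ∀ z ∈ A, c ≤ ‖deriv g z‖)
    (hp : ∀ w : ℂ, (A ∩ g ⁻¹' {w}).encard ≤ (p : ℕ∞)) :
    ∀ B : Set ℂ, MeasurableSet B → g '' A ⊆ B →
      volume A ≤ ENNReal.ofReal ((p : ℝ) / c ^ 2) * volume B := by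
  intro B _ hAB
  have hstrict : ∀ z ∈ A, HasStrictDerivAt g (deriv g z) z := fun z hz =>
    (hg.analyticAt (hΩ.mem_nhds (hAΩ hz))).hasStrictDerivAt
  have hderiv_ne : ∀ z ∈ A, deriv g z ≠ 0 := fun z hz =>
    norm_pos_iff.1 (hc.trans_le (hlow z hz))
  obtain ⟨S, hS, hdisj, hSA, hinj⟩ := exists_measurable_partition_injOn hA
    fun z hz => (hstrict z hz).exists_mem_nhds_injOn (hderiv_ne z hz)
  have hSA' : ∀ n, S n ⊆ A := fun n => hSA ▸ subset_iUnion S n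
  have hexpand : ∀ n, ENNReal.ofReal (c ^ 2) * volume (S n) ≤ volume (g '' S n) := fun n =>
    Complex.ofReal_sq_mul_volume_le_volume_image hc.le (hS n)
      (fun z hz => (hstrict z (hSA' n hz)).hasDerivAt.hasDerivWithinAt) (hinj n)
      (fun z hz => hlow z (hSA' n hz))
  have himage : ∀ n, MeasurableSet (g '' S n) := fun n =>
    (hS n).image_of_continuousOn_injOn
      (hg.continuousOn.mono ((hSA' n).trans hAΩ)) (hinj n)
  have key := mul_measure_le_mul_measure_of_partition hS hdisj hSA himage hexpand hAB hp
  have hc2 : 0 < c ^ 2 := by positivity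
  rw [ENNReal.ofReal_div_of_pos hc2, ENNReal.ofReal_natCast, ← ENNReal.mul_div_right_comm,
    ENNReal.le_div_iff_mul_le (.inl (by positivity)) (.inl ENNReal.ofReal_ne_top), mul_comm]
  simpa using key
end
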